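/- Let α(x₀,x̄) ∈ Ē(W,r), and let ψ(α) be its projection onto Ẽ(W,r). Then for any n₀ ∈ ℤ, n̄ ∈ ℤ^r, and w ∈ W, there exist l ∈ ℕ and β₀,…,β_l ∈ ℂ (depending on α, w, n₀, n̄) such that ψ(α)(n₀,n̄)w = Σ_{i=0}^l β_i α(n₀+i, n̄) w, where component operators are extracted by α(x₀,x̄) = Σ α(n₀,n̄) x₀^{-n₀-1} x̄^{-n̄-1}. -/

import Mathlib

noncomputable section

variable {W : Type*} [AddCommGroup W] [Module ℂ W] {r : ℕ}

/-- A formal series `α(x₀,x̄) ∈ (End W)[[x₀^{±1},…,x_r^{±1}]]`, encoded by its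
coefficient family: `α n₀ nn` is the coefficient of `x₀^{-n₀-1} x̄^{-nn-1}`
(as a map `W → W`). -/
abbrev SeriesOp (W : Type*) (r : ℕ) := ℤ → (Fin r → ℤ) → W → W

/-- `α ∈ E(W,r) = Hom(W, W[[x₁^{±1},…,x_r^{±1}]]((x₀)))`: for each `w`, the
series `α(x₀,x̄)w` is lower truncated in `x₀`. -/
def MemE (α : SeriesOp W r) : Prop :=
  ∀ w : W, ∃ N : ℤ, ∀ n₀ ≥ N, ∀ nn, α n₀ nn w = 0

/-- Multiplication of the series by the polynomial `p(x₀)`: the coefficient of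
`x₀^{-t-1}` in `p(x₀)α(x₀,x̄)` is `Σ_k p_k α(t+k,·)`. -/
def pmul0 (p : Polynomial ℂ) (α : SeriesOp W r) : SeriesOp W r :=
  fun n₀ nn w => ∑ k ∈ Finset.range (p.natDegree + 1), p.coeff k • α (n₀ + k) nn w

/-- Multiplication of the series by the polynomial `p(x_i)` for `1 ≤ i ≤ r`. -/
def pmuli (i : Fin r) (p : Polynomial ℂ) (α : SeriesOp W r) : SeriesOp W r :=
  fun n₀ nn w => ∑ k ∈ Finset.range (p.natDegree + 1),
    p.coeff k • α n₀ (Function.update nn i (nn i + k)) w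

/-- A nonzero polynomial whose nonzero roots are multiplicity-free. -/
def MultFree (p : Polynomial ℂ) : Prop :=
  p ≠ 0 ∧ ∀ z : ℂ, z ≠ 0 → p.rootMultiplicity z ≤ 1

/-- `α ∈ Ē(W,r)`: there are nonzero polynomials `p₀,…,p_r`, the nonzero roots of
`p_i` (`i ≥ 1`) multiplicity-free, with `p₀(x₀)α ∈ E(W,r)` and `p_i(x_i)α = 0` on `W`. -/
def MemEbar (α : SeriesOp W r) : Prop :=
  ∃ (p₀ : Polynomial ℂ) (p : Fin r → Polynomial ℂ),
    p₀ ≠ 0 ∧ (∀ i, MultFree (p i)) ∧ MemE (pmul0 p₀ α) ∧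
      ∀ i n₀ nn w, pmuli i (p i) α n₀ nn w = 0

/-- `α ∈ Ẽ(W,r)`: `α ∈ E(W,r)` itself, and `p_i(x_i)α = 0` as above. -/
def MemEtilde (α : SeriesOp W r) : Prop :=
  MemE α ∧ ∃ p : Fin r → Polynomial ℂ, (∀ i, MultFree (p i)) ∧
    ∀ i n₀ nn w, pmuli i (p i) α n₀ nn w = 0

/-- `α ∈ Ē₀(W,r)`: nonzero polynomials `p_i(x_i)` annihilate `α` on `W` for all
`0 ≤ i ≤ r`, nonzero roots of `p_i` (`i ≥ 1`) multiplicity-free. -/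
def MemE0 (α : SeriesOp W r) : Prop :=
  ∃ (p₀ : Polynomial ℂ) (p : Fin r → Polynomial ℂ),
    p₀ ≠ 0 ∧ (∀ i, MultFree (p i)) ∧
      (∀ n₀ nn w, pmul0 p₀ α n₀ nn w = 0) ∧
      ∀ i n₀ nn w, pmuli i (p i) α n₀ nn w = 0

/-- The projection `ψ` of `Ē(W,r)` onto `Ẽ(W,r)` computed with a polynomial `f`
(with `f(0) ≠ 0` and `f(x₀)α ∈ E(W,r)`):
`ψ(α)w = ι_{x₀;0}(f(x₀)⁻¹)(f(x₀)α(x₀,x̄)w)`, where `ι_{x₀;0}(f(x₀)⁻¹)` is the power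
series expansion of `1/f` at `x₀ = 0`; coefficientwise
`ψ(α)(n₀,nn)w = Σᶠ_i c_i (f·α)(n₀+i,nn)w` with `c_i` the coefficients of the inverse
power series (a finite sum under the above hypotheses). -/
def psi (f : Polynomial ℂ) (α : SeriesOp W r) : SeriesOp W r :=
  fun n₀ nn w => ∑ᶠ i : ℕ,
    (PowerSeries.coeff (R := ℂ) i ((f : PowerSeries ℂ)⁻¹)) • pmul0 f α (n₀ + i) nn w

/-- for `α ∈ Ē(W,r)` (with `ψ` computed via a valid polynomial `f`,
`f(0) ≠ 0`), for any `n₀ ∈ ℤ`, `nn ∈ ℤ^r` and `w ∈ W` there exist `l ∈ ℕ` and scalars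
`β₀,…,β_l ∈ ℂ` with `ψ(α)(n₀,nn)w = Σ_{i=0}^l βᵢ α(n₀+i,nn)w`. -/
theorem stmt15 (α : SeriesOp W r) (hα : MemEbar α)
    (f : Polynomial ℂ) (hf0 : f.coeff 0 ≠ 0) (hf : MemE (pmul0 f α))
    (n₀ : ℤ) (nn : Fin r → ℤ) (w : W) :
    ∃ (l : ℕ) (β : ℕ → ℂ),
      psi f α n₀ nn w = ∑ i ∈ Finset.range (l + 1), β i • α (n₀ + i) nn w := by
  obtain ⟨N, hN⟩ := hf w
  set c : ℕ → ℂ := fun i => PowerSeries.coeff (R := ℂ) i ((f : PowerSeries ℂ)⁻¹) with hc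
  set L : ℕ := (N - n₀).toNat with hL
  set d := f.natDegree with hd
  refine ⟨L + d, fun j => ∑ p ∈ Finset.range L ×ˢ Finset.range (d + 1),
    if p.1 + p.2 = j then c p.1 * f.coeff p.2 else 0, ?_⟩
  have hsupp : (Function.support fun i : ℕ => c i • pmul0 f α (n₀ + i) nn w)
      ⊆ (Finset.range L : Set ℕ) := by
    intro i hi
    simp only [Function.mem_support] at hi
    by_contra h
    simp only [Finset.coe_range, Set.mem_Iio, not_lt] at h
    have : n₀ + i ≥ N := by
      have := Int.self_le_toNat (N - n₀)
      have h2 : (L : ℤ) ≤ (i : ℤ) := by exact_mod_cast h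
      omega
    exact hi (by rw [hN _ this nn, smul_zero])
  rw [psi, finsum_eq_sum_of_support_subset _ hsupp]
  have LHS : ∑ i ∈ Finset.range L, c i • pmul0 f α (n₀ + i) nn w
      = ∑ p ∈ Finset.range L ×ˢ Finset.range (d + 1),
        (c p.1 * f.coeff p.2) • α (n₀ + p.1 + p.2) nn w := by
    rw [Finset.sum_product]
    refine Finset.sum_congr rfl fun i _ => ?_
    rw [pmul0, Finset.smul_sum]
    refine Finset.sum_congr rfl fun k _ => ?_
    rw [smul_smul]
  rw [LHS]
  simp only []
  rw [show (∑ i ∈ Finset.range (L + d + 1),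
      (∑ p ∈ Finset.range L ×ˢ Finset.range (d + 1),
        if p.1 + p.2 = i then c p.1 * f.coeff p.2 else 0) • α (n₀ + i) nn w)
    = ∑ i ∈ Finset.range (L + d + 1), ∑ p ∈ Finset.range L ×ˢ Finset.range (d + 1),
        (if p.1 + p.2 = i then c p.1 * f.coeff p.2 else 0) • α (n₀ + i) nn w from
    Finset.sum_congr rfl fun i _ => Finset.sum_smul]
  rw [Finset.sum_comm]
  refine Finset.sum_congr rfl fun p hp => ?_
  simp only [Finset.mem_product, Finset.mem_range] at hp
  have hmem : p.1 + p.2 ∈ Finset.range (L + d + 1) := by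
    simp only [Finset.mem_range]; omega
  calc (c p.1 * f.coeff p.2) • α (n₀ + ↑p.1 + ↑p.2) nn w
      = ∑ j ∈ Finset.range (L + d + 1),
          if p.1 + p.2 = j then (c p.1 * f.coeff p.2) • α (n₀ + j) nn w else 0 := by
        rw [Finset.sum_ite_eq, if_pos hmem]
        congr 1
        push_cast
        ring
    _ = _ := by
        refine Finset.sum_congr rfl fun j _ => ?_
        rw [ite_smul, zero_smul]
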